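/- Conversely, if a Clifford unitary U defines code states |x̄⟩ = U(|x⟩ ⊗ |0⟩^{⊗n-k}) satisfying ⟨x̄| σ_μ |ȳ⟩ = C_μ δ_{xy} for all x,y and all μ with 1 ≤ w(μ) ≤ d, then tr[σ_μ U (σ_{ν_A} ⊗ σ_{ν_B}) U†] = 0 for every ν_A ∈ {0,1,2,3}^k \ {0}, ν_B ∈ {0,3}^{n-k}, and every μ with 1 ≤ w(μ) ≤ d. -/

import Mathlib

open Matrix BigOperators Finset

/-- The four `2×2` Pauli matrices: `I, X, Y, Z`. -/
noncomputable def pauli : Fin 4 → Matrix (Fin 2) (Fin 2) ℂ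
  | 0 => !![1, 0; 0, 1]
  | 1 => !![0, 1; 1, 0]
  | 2 => !![0, -Complex.I; Complex.I, 0]
  | 3 => !![1, 0; 0, -1]

/-- The Pauli operator `σ_ν = σ_{ν_1} ⊗ ⋯ ⊗ σ_{ν_n}` on the qubits indexed by `ι`. -/
noncomputable def pauliString {ι : Type*} [Fintype ι] (ν : ι → Fin 4) :
    Matrix (ι → Fin 2) (ι → Fin 2) ℂ :=
  fun x y => ∏ i, pauli (ν i) (x i) (y i)

/-- The weight of a Pauli string: the number of nonidentity tensor factors. -/
def pWeight {ι : Type*} [Fintype ι] [DecidableEq ι] (ν : ι → Fin 4) : ℕ :=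
  (Finset.univ.filter fun i => ν i ≠ 0).card

variable {k m : ℕ}

/-- The vector `|x⟩_A ⊗ |0⟩_B` on the `k + m` qubits `Fin k ⊕ Fin m`. -/
noncomputable def ketX0 (x : Fin k → Fin 2) : (Fin k ⊕ Fin m → Fin 2) → ℂ :=
  fun z => if (∀ i, z (Sum.inl i) = x i) ∧ (∀ j : Fin m, z (Sum.inr j) = 0) then 1 else 0

/-- The code state `|x̄⟩ = U (|x⟩ ⊗ |0⟩^{⊗ m})`. -/
noncomputable def codeState (U : Matrix (Fin k ⊕ Fin m → Fin 2) (Fin k ⊕ Fin m → Fin 2) ℂ)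
    (x : Fin k → Fin 2) : (Fin k ⊕ Fin m → Fin 2) → ℂ :=
  U.mulVec (ketX0 x)

/-- The operator `I_A ⊗ |0⟩⟨0|_B^{⊗ m}`. -/
noncomputable def idProjZero :
    Matrix (Fin k ⊕ Fin m → Fin 2) (Fin k ⊕ Fin m → Fin 2) ℂ :=
  fun z w => if (∀ i, z (Sum.inl i) = w (Sum.inl i)) ∧ (∀ j : Fin m, z (Sum.inr j) = 0) ∧
      (∀ j : Fin m, w (Sum.inr j) = 0) then 1 else 0

/-! If `μ` is not the Pauli string `μ'` with `U σ_ν U† = ±σ_{μ'}`, the trace vanishes because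
distinct Pauli strings are trace-orthogonal. If `μ = μ'`, then `U† σ_μ U = ±σ_ν`, and reading the
code condition on the basis states `|x⟩ ⊗ |0⟩` (on which `σ_{ν_B}`, being diagonal with
`⟨0|σ|0⟩ = 1`, acts trivially) gives `±σ_{ν_A} = C_μ · 1`. That is impossible: `σ_{ν_A}` is
traceless, so `C_μ = 0`, yet it is nonzero. -/

lemma trace_pauli (a : Fin 4) : (pauli a).trace = if a = 0 then 2 else 0 := by
  fin_cases a <;> norm_num [pauli, Matrix.trace_fin_two]

lemma trace_pauli_mul (a b : Fin 4) : (pauli a * pauli b).trace = if a = b then 2 else 0 := by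
  fin_cases a <;> fin_cases b <;> norm_num [pauli, Matrix.trace_fin_two]

section PauliString

variable {ι : Type*} [Fintype ι] [DecidableEq ι]

lemma trace_pauliString (ν : ι → Fin 4) :
    (pauliString ν).trace = ∏ i, (pauli (ν i)).trace := by
  simp only [Matrix.trace, Matrix.diag, pauliString]
  rw [Finset.prod_univ_sum, Fintype.piFinset_univ]

lemma trace_pauliString_mul (ν₁ ν₂ : ι → Fin 4) :
    (pauliString ν₁ * pauliString ν₂).trace = ∏ i, (pauli (ν₁ i) * pauli (ν₂ i)).trace := by
  simp only [Matrix.trace, Matrix.diag, Matrix.mul_apply, pauliString, ← Finset.prod_mul_distrib]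
  rw [Finset.prod_univ_sum, Fintype.piFinset_univ]
  refine Finset.sum_congr rfl fun x _ => ?_
  rw [Finset.prod_univ_sum, Fintype.piFinset_univ]

lemma trace_pauliString_mul_eq_ite (ν₁ ν₂ : ι → Fin 4) :
    (pauliString ν₁ * pauliString ν₂).trace = if ν₁ = ν₂ then 2 ^ Fintype.card ι else 0 := by
  simp only [trace_pauliString_mul, trace_pauli_mul]
  split_ifs with h
  · simp [h]
  · obtain ⟨i, hi⟩ := Function.ne_iff.mp h
    exact Finset.prod_eq_zero (Finset.mem_univ i) (if_neg hi)

lemma trace_pauliString_eq_zero {ν : ι → Fin 4} (hν : ν ≠ 0) : (pauliString ν).trace = 0 := by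
  obtain ⟨i, hi⟩ := Function.ne_iff.mp hν
  rw [trace_pauliString]
  exact Finset.prod_eq_zero (Finset.mem_univ i) (by simpa [trace_pauli] using hi)

lemma pauliString_ne_zero (ν : ι → Fin 4) : pauliString ν ≠ 0 := by
  intro h
  have := trace_pauliString_mul_eq_ite ν ν
  rw [h, Matrix.zero_mul, Matrix.trace_zero, if_pos rfl] at this
  exact pow_ne_zero _ two_ne_zero this.symm

lemma pauliString_ne_smul_one {ν : ι → Fin 4} (hν : ν ≠ 0) (c : ℂ) : pauliString ν ≠ c • 1 := by
  intro h
  have hc : c = 0 := by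
    have := trace_pauliString_eq_zero hν
    simpa [h, Matrix.trace_one] using this
  exact pauliString_ne_zero ν (by simpa [hc] using h)

end PauliString

lemma pauli_zero_zero_of_eq_zero_or_eq_three {a : Fin 4} (h : a = 0 ∨ a = 3) : pauli a 0 0 = 1 := by
  rcases h with rfl | rfl <;> simp [pauli]

lemma pauliString_sumElim_apply_zero (νA : Fin k → Fin 4) {νB : Fin m → Fin 4}
    (hB : ∀ j, νB j = 0 ∨ νB j = 3) (x y : Fin k → Fin 2) :
    pauliString (Sum.elim νA νB) (Sum.elim x 0) (Sum.elim y 0) = pauliString νA x y := by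
  simp only [pauliString, Fintype.prod_sum_type, Sum.elim_inl, Sum.elim_inr, Pi.zero_apply,
    pauli_zero_zero_of_eq_zero_or_eq_three (hB _), Finset.prod_const_one, mul_one]

lemma ketX0_eq_single (x : Fin k → Fin 2) :
    (ketX0 x : (Fin k ⊕ Fin m → Fin 2) → ℂ) = Pi.single (Sum.elim x 0) 1 := by
  funext z
  simp only [ketX0, Pi.single_apply, funext_iff, Sum.forall, Sum.elim_inl, Sum.elim_inr,
    Pi.zero_apply]

lemma star_codeState_dotProduct_mulVec
    (U M : Matrix (Fin k ⊕ Fin m → Fin 2) (Fin k ⊕ Fin m → Fin 2) ℂ) (x y : Fin k → Fin 2) :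
    star (codeState U x) ⬝ᵥ M *ᵥ codeState U y =
      (star U * M * U) (Sum.elim x 0) (Sum.elim y 0) := by
  rw [codeState, codeState, Matrix.mulVec_mulVec, Matrix.star_mulVec, Matrix.dotProduct_mulVec,
    Matrix.vecMul_vecMul, ← Matrix.dotProduct_mulVec, ketX0_eq_single, ketX0_eq_single,
    Matrix.mulVec_single_one, star_eq_conjTranspose, Matrix.mul_assoc]
  simp [Pi.single_apply, dotProduct, Matrix.col_apply]

lemma star_mul_mul_eq_inv_smul_of_mul_mul_star_eq_smul {n : Type*} [Fintype n] [DecidableEq n]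
    {U A B : Matrix n n ℂ} (hU : U ∈ Matrix.unitaryGroup n ℂ) {ε : ℂ} (hε : ε ≠ 0)
    (h : U * A * star U = ε • B) : star U * B * U = ε⁻¹ • A := by
  have hUU : star U * U = 1 := hU.1
  rw [← inv_smul_smul₀ hε B, ← h]
  simp only [Matrix.mul_smul, Matrix.smul_mul, Matrix.mul_assoc, hUU, Matrix.mul_one]
  rw [← Matrix.mul_assoc, hUU, Matrix.one_mul]

/-- Conversely, if the code states `|x̄⟩ = U(|x⟩ ⊗ |0⟩^{⊗m})` of a
Clifford unitary `U` satisfy `⟨x̄|σ_μ|ȳ⟩ = C_μ δ_{xy}` for all `x, y` and all `μ`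
with `1 ≤ w(μ) ≤ d`, then `tr[σ_μ U (σ_{ν_A} ⊗ σ_{ν_B}) U†] = 0` for every
nonzero `ν_A ∈ {0,1,2,3}^k`, every `ν_B ∈ {0,3}^m` and every such `μ`. -/
theorem distance_condition_necessary (k m d : ℕ)
    (U : Matrix (Fin k ⊕ Fin m → Fin 2) (Fin k ⊕ Fin m → Fin 2) ℂ)
    (hU : U ∈ Matrix.unitaryGroup (Fin k ⊕ Fin m → Fin 2) ℂ)
    (hClif : ∀ ν : Fin k ⊕ Fin m → Fin 4, ∃ (μ : Fin k ⊕ Fin m → Fin 4) (ε : ℂ),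
      (ε = 1 ∨ ε = -1) ∧ U * pauliString ν * star U = ε • pauliString μ)
    (C : (Fin k ⊕ Fin m → Fin 4) → ℝ)
    (hcode : ∀ μ : Fin k ⊕ Fin m → Fin 4, 1 ≤ pWeight μ → pWeight μ ≤ d →
      ∀ x y : Fin k → Fin 2,
        star (codeState U x) ⬝ᵥ (pauliString μ).mulVec (codeState U y) =
          if x = y then (C μ : ℂ) else 0) :
    ∀ (νA : Fin k → Fin 4) (νB : Fin m → Fin 4), νA ≠ 0 →
      (∀ j, νB j = 0 ∨ νB j = 3) →
      ∀ μ : Fin k ⊕ Fin m → Fin 4, 1 ≤ pWeight μ → pWeight μ ≤ d →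
        (pauliString μ * (U * pauliString (Sum.elim νA νB) * star U)).trace = 0 := by
  intro νA νB hA hB μ hw1 hw2
  obtain ⟨μ', ε, hε, hconj⟩ := hClif (Sum.elim νA νB)
  rw [hconj, Matrix.mul_smul, Matrix.trace_smul, trace_pauliString_mul_eq_ite]
  split_ifs with hμ
  · subst hμ
    have hε0 : ε ≠ 0 := by rcases hε with rfl | rfl <;> norm_num
    have hback := star_mul_mul_eq_inv_smul_of_mul_mul_star_eq_smul hU hε0 hconj
    refine absurd ?_ (pauliString_ne_smul_one hA (ε * C μ))
    ext x y
    have hxy := hcode μ hw1 hw2 x y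
    rw [star_codeState_dotProduct_mulVec, hback, Matrix.smul_apply,
      pauliString_sumElim_apply_zero νA hB, smul_eq_mul] at hxy
    rw [Matrix.smul_apply, Matrix.one_apply, smul_eq_mul, mul_assoc, mul_ite, mul_one, mul_zero,
      ← hxy, mul_inv_cancel_left₀ hε0]
  · rw [smul_zero]
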